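/- arXiv:2403.17559 — 10 statements merged into one kernel-verified Lean document; each statement's English description precedes it below -/
import Mathlib

section
/- For all vectors a, b, x in a complex inner product space and all α, β ∈ ℂ, one has |α⟨a,x⟩⟨x,b⟩ − β‖x‖²⟨a,b⟩| ≤ max{|β|, |α−β|}·‖x‖²·‖a‖·‖b‖. -/
local notation "⟪" x ", " y "⟫" => @inner ℂ _ _ x y

/-!
Let `P` be the orthogonal projection onto `ℂ ∙ x` and `Q = 1 - P`. Since
`⟪a, x⟫ ⟪x, b⟫ = ‖x‖² ⟪P a, P b⟫` and `⟪a, b⟫ = ⟪P a, P b⟫ + ⟪Q a, Q b⟫`, the quantity to bound is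
`‖x‖² ⟪a, T b⟫` for the operator `T = (α - β) P - β Q`, whose norm is at most
`max ‖α - β‖ ‖β‖` because `P` and `Q` split every vector into orthogonal parts.
-/

theorem mul_add_mul_le_mul_of_sq_add_sq_eq {p q r s A B : ℝ} (hA : 0 ≤ A) (hB : 0 ≤ B)
    (ha : p ^ 2 + q ^ 2 = A ^ 2) (hb : r ^ 2 + s ^ 2 = B ^ 2) :
    p * r + q * s ≤ A * B := by
  have hsq : (p * r + q * s) ^ 2 ≤ (A * B) ^ 2 := by
    nlinarith [sq_nonneg (p * s - q * r)]
  exact le_of_sq_le_sq hsq (by positivity)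

section

open scoped InnerProductSpace

variable {𝕜 E : Type*} [RCLike 𝕜] [NormedAddCommGroup E] [InnerProductSpace 𝕜 E]

theorem inner_mul_inner_eq_norm_sq_mul_inner_starProjection_singleton (x a b : E) :
    ⟪a, x⟫_𝕜 * ⟪x, b⟫_𝕜 = (‖x‖ : 𝕜) ^ 2 *
      ⟪(𝕜 ∙ x).starProjection a, (𝕜 ∙ x).starProjection b⟫_𝕜 := by
  rcases eq_or_ne x 0 with rfl | hx
  · simp
  have hx' : (‖x‖ : 𝕜) ≠ 0 := by exact_mod_cast norm_ne_zero_iff.mpr hx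
  simp only [Submodule.starProjection_singleton, inner_smul_left, inner_smul_right, map_div₀,
    inner_conj_symm, RCLike.conj_ofReal, inner_self_eq_norm_sq_to_K]
  push_cast
  field_simp

namespace Submodule

variable (K : Submodule 𝕜 E) [K.HasOrthogonalProjection]

theorem inner_eq_inner_starProjection_add_inner_starProjection_orthogonal (a b : E) :
    ⟪a, b⟫_𝕜 = ⟪K.starProjection a, K.starProjection b⟫_𝕜 +
      ⟪Kᗮ.starProjection a, Kᗮ.starProjection b⟫_𝕜 := by
  conv_lhs => rw [← K.starProjection_add_starProjection_orthogonal a,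
    ← K.starProjection_add_starProjection_orthogonal b]
  have h₁ : ⟪K.starProjection a, Kᗮ.starProjection b⟫_𝕜 = 0 :=
    Kᗮ.starProjection_apply_mem b _ (K.starProjection_apply_mem a)
  have h₂ : ⟪Kᗮ.starProjection a, K.starProjection b⟫_𝕜 = 0 :=
    Kᗮ.starProjection_apply_mem a _ (K.starProjection_apply_mem b) |> inner_eq_zero_symm.mp
  simp only [inner_add_left, inner_add_right, h₁, h₂, add_zero, zero_add]

theorem norm_starProjection_mul_add_le_norm_mul_norm (a b : E) :
    ‖K.starProjection a‖ * ‖K.starProjection b‖ +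
        ‖Kᗮ.starProjection a‖ * ‖Kᗮ.starProjection b‖ ≤ ‖a‖ * ‖b‖ :=
  mul_add_mul_le_mul_of_sq_add_sq_eq (norm_nonneg a) (norm_nonneg b)
    (K.norm_sq_eq_add_norm_sq_starProjection a).symm
    (K.norm_sq_eq_add_norm_sq_starProjection b).symm

theorem norm_mul_inner_starProjection_add_le (γ δ : 𝕜) (a b : E) :
    ‖γ * ⟪K.starProjection a, K.starProjection b⟫_𝕜 +
        δ * ⟪Kᗮ.starProjection a, Kᗮ.starProjection b⟫_𝕜‖ ≤ max ‖γ‖ ‖δ‖ * (‖a‖ * ‖b‖) := by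
  calc _ ≤ ‖γ‖ * (‖K.starProjection a‖ * ‖K.starProjection b‖) +
          ‖δ‖ * (‖Kᗮ.starProjection a‖ * ‖Kᗮ.starProjection b‖) := by
        refine (norm_add_le _ _).trans ?_
        rw [norm_mul, norm_mul]
        gcongr <;> exact norm_inner_le_norm _ _
    _ ≤ max ‖γ‖ ‖δ‖ * (‖K.starProjection a‖ * ‖K.starProjection b‖) +
          max ‖γ‖ ‖δ‖ * (‖Kᗮ.starProjection a‖ * ‖Kᗮ.starProjection b‖) := by
        gcongr
        exacts [le_max_left _ _, le_max_right _ _]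
    _ ≤ max ‖γ‖ ‖δ‖ * (‖a‖ * ‖b‖) := by
        rw [← mul_add]
        gcongr
        exact K.norm_starProjection_mul_add_le_norm_mul_norm a b

end Submodule

end

theorem stmt_6 {X : Type*} [NormedAddCommGroup X] [InnerProductSpace ℂ X]
    (a b x : X) (α β : ℂ) :
    ‖α * ⟪a, x⟫ * ⟪x, b⟫ - β * (‖x‖ : ℂ) ^ 2 * ⟪a, b⟫‖ ≤
      max ‖β‖ ‖α - β‖ * ‖x‖ ^ 2 * ‖a‖ * ‖b‖ := by
  have hT : α * ⟪a, x⟫ * ⟪x, b⟫ - β * (‖x‖ : ℂ) ^ 2 * ⟪a, b⟫ = (‖x‖ : ℂ) ^ 2 *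
      ((α - β) * ⟪(ℂ ∙ x).starProjection a, (ℂ ∙ x).starProjection b⟫ +
        -β * ⟪(ℂ ∙ x)ᗮ.starProjection a, (ℂ ∙ x)ᗮ.starProjection b⟫) := by
    rw [(ℂ ∙ x).inner_eq_inner_starProjection_add_inner_starProjection_orthogonal a b, mul_assoc α,
      inner_mul_inner_eq_norm_sq_mul_inner_starProjection_singleton,
      RCLike.ofReal_eq_complex_ofReal]
    ring
  rw [hT, norm_mul, norm_pow, Complex.norm_real, norm_norm, max_comm, ← norm_neg β]
  calc _ ≤ ‖x‖ ^ 2 * (max ‖α - β‖ ‖-β‖ * (‖a‖ * ‖b‖)) := by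
        gcongr
        exact (ℂ ∙ x).norm_mul_inner_starProjection_add_le _ _ a b
    _ = _ := by ring
end

section
/- (Richard's inequality) For all vectors a, b, x in a complex inner product space, |⟨a,x⟩⟨x,b⟩ − (1/2)‖x‖²⟨a,b⟩| ≤ (1/2)‖x‖²‖a‖‖b‖. -/
/-!
Let `R` be the orthogonal reflection in the line `ℂ ∙ x`. Expanding `R b = 2 (⟪x, b⟫ / ‖x‖²) x - b`
gives `⟪a, x⟫ ⟪x, b⟫ - ½ ‖x‖² ⟪a, b⟫ = ½ ‖x‖² ⟪a, R b⟫`, and since `R` is an isometry,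
Cauchy–Schwarz bounds `|⟪a, R b⟫|` by `‖a‖ ‖b‖`.
-/

local notation "⟪" x ", " y "⟫" => @inner ℂ _ _ x y

open Submodule

theorem sq_norm_mul_inner_reflection_span_singleton {𝕜 E : Type*} [RCLike 𝕜]
    [NormedAddCommGroup E] [InnerProductSpace 𝕜 E] (a b x : E) :
    (‖x‖ : 𝕜) ^ 2 * inner 𝕜 a (reflection (𝕜 ∙ x) b) =
      2 * (inner 𝕜 a x * inner 𝕜 x b) - (‖x‖ : 𝕜) ^ 2 * inner 𝕜 a b := by
  rcases eq_or_ne x 0 with rfl | hx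
  · simp
  have hx' : (‖x‖ : 𝕜) ≠ 0 := by simpa using hx
  rw [reflection_singleton_apply, inner_sub_right, two_smul, inner_add_right, inner_smul_right]
  field_simp
  ring

theorem stmt_7 {X : Type*} [NormedAddCommGroup X] [InnerProductSpace ℂ X]
    (a b x : X) :
    ‖⟪a, x⟫ * ⟪x, b⟫ - (1 / 2 : ℂ) * (‖x‖ : ℂ) ^ 2 * ⟪a, b⟫‖ ≤
      (1 / 2) * ‖x‖ ^ 2 * ‖a‖ * ‖b‖ := by
  have key : ⟪a, x⟫ * ⟪x, b⟫ - (1 / 2 : ℂ) * (‖x‖ : ℂ) ^ 2 * ⟪a, b⟫ =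
      (1 / 2 : ℂ) * ((‖x‖ : ℂ) ^ 2 * ⟪a, reflection (ℂ ∙ x) b⟫) := by
    linear_combination (-1 / 2 : ℂ) * sq_norm_mul_inner_reflection_span_singleton (𝕜 := ℂ) a b x
  calc ‖⟪a, x⟫ * ⟪x, b⟫ - (1 / 2 : ℂ) * (‖x‖ : ℂ) ^ 2 * ⟪a, b⟫‖
      = (1 / 2) * ‖x‖ ^ 2 * ‖⟪a, reflection (ℂ ∙ x) b⟫‖ := by
        rw [key, norm_mul, norm_mul, norm_pow, Complex.norm_real, norm_norm]
        norm_num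
        ring
    _ ≤ (1 / 2) * ‖x‖ ^ 2 * (‖a‖ * ‖reflection (ℂ ∙ x) b‖) := by
        gcongr
        exact norm_inner_le_norm a _
    _ = (1 / 2) * ‖x‖ ^ 2 * ‖a‖ * ‖b‖ := by
        rw [LinearIsometryEquiv.norm_map]
        ring
end

section
/- (Buzano's inequality) For all vectors a, b, x in a complex inner product space, |⟨a,x⟩⟨x,b⟩| ≤ (1/2)‖x‖²(|⟨a,b⟩| + ‖a‖‖b‖). -/
local notation "⟪" x ", " y "⟫" => @inner ℂ _ _ x y

/-
Reflecting `b` in the line `𝕜 ∙ x` preserves its norm, and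
`⟪a, refl b⟫ = 2 ⟪a, x⟫ ⟪x, b⟫ / ‖x‖² - ⟪a, b⟫`, so Cauchy–Schwarz bounds this quantity by `‖a‖ ‖b‖`;
the triangle inequality then gives the claim.
-/

theorem norm_two_mul_inner_mul_inner_sub_le {𝕜 E : Type*} [RCLike 𝕜] [NormedAddCommGroup E]
    [InnerProductSpace 𝕜 E] (a b x : E) :
    ‖2 * (inner 𝕜 a x * inner 𝕜 x b) - (‖x‖ : 𝕜) ^ 2 * inner 𝕜 a b‖ ≤ ‖x‖ ^ 2 * (‖a‖ * ‖b‖) := by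
  rcases eq_or_ne x 0 with rfl | hx
  · simp
  have hx0 : (‖x‖ : 𝕜) ≠ 0 := by simpa using hx
  have hinner : inner 𝕜 a ((𝕜 ∙ x).reflection b) * (‖x‖ : 𝕜) ^ 2 =
      2 * (inner 𝕜 a x * inner 𝕜 x b) - (‖x‖ : 𝕜) ^ 2 * inner 𝕜 a b := by
    rw [Submodule.reflection_singleton_apply, inner_sub_right, ← Nat.cast_smul_eq_nsmul 𝕜,
      inner_smul_right, inner_smul_right]
    field_simp
    ring
  calc ‖2 * (inner 𝕜 a x * inner 𝕜 x b) - (‖x‖ : 𝕜) ^ 2 * inner 𝕜 a b‖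
      = ‖inner 𝕜 a ((𝕜 ∙ x).reflection b)‖ * ‖x‖ ^ 2 := by simp [← hinner]
    _ ≤ ‖a‖ * ‖(𝕜 ∙ x).reflection b‖ * ‖x‖ ^ 2 := by gcongr; exact norm_inner_le_norm a _
    _ = ‖x‖ ^ 2 * (‖a‖ * ‖b‖) := by rw [LinearIsometryEquiv.norm_map]; ring

theorem stmt_8 {X : Type*} [NormedAddCommGroup X] [InnerProductSpace ℂ X]
    (a b x : X) :
    ‖⟪a, x⟫ * ⟪x, b⟫‖ ≤ (1 / 2) * ‖x‖ ^ 2 * (‖⟪a, b⟫‖ + ‖a‖ * ‖b‖) := by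
  set c : ℂ := (‖x‖ : ℂ) ^ 2 * ⟪a, b⟫
  have hc : ‖c‖ = ‖x‖ ^ 2 * ‖⟪a, b⟫‖ := by simp [c]
  calc ‖⟪a, x⟫ * ⟪x, b⟫‖ = (1 / 2) * ‖2 * (⟪a, x⟫ * ⟪x, b⟫)‖ := by simp
    _ ≤ (1 / 2) * (‖c‖ + ‖2 * (⟪a, x⟫ * ⟪x, b⟫) - c‖) := by
        gcongr; exact norm_le_norm_add_norm_sub' _ _
    _ ≤ (1 / 2) * (‖x‖ ^ 2 * ‖⟪a, b⟫‖ + ‖x‖ ^ 2 * (‖a‖ * ‖b‖)) := by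
        rw [hc]; gcongr; exact norm_two_mul_inner_mul_inner_sub_le a b x
    _ = (1 / 2) * ‖x‖ ^ 2 * (‖⟪a, b⟫‖ + ‖a‖ * ‖b‖) := by ring
end

section
/- For all vectors a, b, x in a complex inner product space with b ≠ 0 and x ≠ 0, and all α, β ∈ ℂ, one has (‖x‖²/‖b‖²)·|α⟨a,x⟩⟨x,b⟩/‖x‖² − β⟨a,b⟩|² ≤ |α−β|²|⟨a,x⟩|² + |β|²(‖a‖²‖x‖² − |⟨a,x⟩|²). -/
/-!
Let `p = ⟪a, x⟫ x / ‖x‖²` be the orthogonal projection of `a` onto the line through `x` and put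
`u = conj (α - β) • p - conj β • (a - p)`. Then `⟪u, b⟫ = α ⟪a, x⟫ ⟪x, b⟫ / ‖x‖² - β ⟪a, b⟫`, and
since `p ⟂ a - p`, Pythagoras gives `‖x‖² ‖u‖² = |α - β|² |⟪a, x⟫|² + |β|² (‖a‖² ‖x‖² - |⟪a, x⟫|²)`.
The inequality is Cauchy–Schwarz `|⟪u, b⟫|² ≤ ‖u‖² ‖b‖²`.
-/

open scoped InnerProductSpace

section

variable {𝕜 E : Type*} [RCLike 𝕜] [NormedAddCommGroup E] [InnerProductSpace 𝕜 E]

theorem norm_mul_inner_add_mul_inner_sq_le {p q : E} (hpq : ⟪p, q⟫_𝕜 = 0) (γ δ : 𝕜) (b : E) :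
    ‖γ * ⟪p, b⟫_𝕜 + δ * ⟪q, b⟫_𝕜‖ ^ 2 ≤ (‖γ‖ ^ 2 * ‖p‖ ^ 2 + ‖δ‖ ^ 2 * ‖q‖ ^ 2) * ‖b‖ ^ 2 := by
  set u := (starRingEnd 𝕜) γ • p + (starRingEnd 𝕜) δ • q
  have hub : ⟪u, b⟫_𝕜 = γ * ⟪p, b⟫_𝕜 + δ * ⟪q, b⟫_𝕜 := by
    simp only [u, inner_add_left, inner_smul_left, RCLike.conj_conj]
  have hu : ‖u‖ ^ 2 = ‖γ‖ ^ 2 * ‖p‖ ^ 2 + ‖δ‖ ^ 2 * ‖q‖ ^ 2 := by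
    have hperp : ⟪(starRingEnd 𝕜) γ • p, (starRingEnd 𝕜) δ • q⟫_𝕜 = 0 := by
      simp only [inner_smul_left, inner_smul_right, hpq, mul_zero]
    rw [sq, norm_add_sq_eq_norm_sq_add_norm_sq_of_inner_eq_zero _ _ hperp]
    simp only [norm_smul, RCLike.norm_conj]
    ring
  rw [← hub, ← hu, ← mul_pow]
  exact pow_le_pow_left₀ (norm_nonneg _) (norm_inner_le_norm u b) 2

theorem Submodule.norm_mul_inner_starProjection_sub_mul_inner_sq_le (K : Submodule 𝕜 E)
    [K.HasOrthogonalProjection] (a b : E) (α β : 𝕜) :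
    ‖α * ⟪K.starProjection a, b⟫_𝕜 - β * ⟪a, b⟫_𝕜‖ ^ 2 ≤
      (‖α - β‖ ^ 2 * ‖K.starProjection a‖ ^ 2 +
        ‖β‖ ^ 2 * (‖a‖ ^ 2 - ‖K.starProjection a‖ ^ 2)) * ‖b‖ ^ 2 := by
  set p := K.starProjection a
  have hperp : ⟪p, a - p⟫_𝕜 = 0 :=
    inner_eq_zero_symm.mp (K.starProjection_inner_eq_zero a p (K.starProjection_apply_mem a))
  have hpyth : ‖a - p‖ ^ 2 = ‖a‖ ^ 2 - ‖p‖ ^ 2 := by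
    have := norm_add_sq_eq_norm_sq_add_norm_sq_of_inner_eq_zero _ _ hperp
    rw [add_sub_cancel] at this
    linarith
  have hsplit : α * ⟪p, b⟫_𝕜 - β * ⟪a, b⟫_𝕜 = (α - β) * ⟪p, b⟫_𝕜 + -β * ⟪a - p, b⟫_𝕜 := by
    rw [inner_sub_left]; ring
  rw [hsplit, ← hpyth, ← norm_neg β]
  exact norm_mul_inner_add_mul_inner_sq_le hperp _ _ b

theorem norm_starProjection_singleton_mul_norm (x a : E) :
    ‖(𝕜 ∙ x).starProjection a‖ * ‖x‖ = ‖⟪x, a⟫_𝕜‖ := by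
  rcases eq_or_ne x 0 with rfl | hx
  · simp
  have : ‖x‖ ≠ 0 := norm_ne_zero_iff.mpr hx
  rw [Submodule.starProjection_singleton, norm_smul, norm_div]
  simp only [RCLike.norm_ofReal, abs_pow, abs_norm]
  field_simp

theorem inner_starProjection_singleton_left (x a b : E) :
    ⟪(𝕜 ∙ x).starProjection a, b⟫_𝕜 = ⟪a, x⟫_𝕜 * ⟪x, b⟫_𝕜 / ((‖x‖ ^ 2 : ℝ) : 𝕜) := by
  rw [Submodule.starProjection_singleton, inner_smul_left, map_div₀, RCLike.conj_ofReal,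
    inner_conj_symm]
  ring

theorem norm_mul_inner_mul_inner_div_sub_mul_inner_sq_le (a b x : E) (α β : 𝕜) :
    ‖x‖ ^ 2 / ‖b‖ ^ 2 * ‖α * ⟪a, x⟫_𝕜 * ⟪x, b⟫_𝕜 / (‖x‖ : 𝕜) ^ 2 - β * ⟪a, b⟫_𝕜‖ ^ 2 ≤
      ‖α - β‖ ^ 2 * ‖⟪a, x⟫_𝕜‖ ^ 2 + ‖β‖ ^ 2 * (‖a‖ ^ 2 * ‖x‖ ^ 2 - ‖⟪a, x⟫_𝕜‖ ^ 2) := by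
  set p := (𝕜 ∙ x).starProjection a
  set S := ‖α - β‖ ^ 2 * ‖p‖ ^ 2 + ‖β‖ ^ 2 * (‖a‖ ^ 2 - ‖p‖ ^ 2)
  have hp : α * ⟪a, x⟫_𝕜 * ⟪x, b⟫_𝕜 / (‖x‖ : 𝕜) ^ 2 = α * ⟪p, b⟫_𝕜 := by
    rw [inner_starProjection_singleton_left]; push_cast; ring
  have hnorm : ‖p‖ * ‖x‖ = ‖⟪a, x⟫_𝕜‖ := by
    rw [norm_starProjection_singleton_mul_norm, norm_inner_symm]
  have hS : 0 ≤ S := by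
    have hpa : ‖p‖ ^ 2 ≤ ‖a‖ ^ 2 := by gcongr; exact (𝕜 ∙ x).norm_starProjection_apply_le a
    have := sub_nonneg.mpr hpa
    positivity
  have hRHS : ‖x‖ ^ 2 * S =
      ‖α - β‖ ^ 2 * ‖⟪a, x⟫_𝕜‖ ^ 2 + ‖β‖ ^ 2 * (‖a‖ ^ 2 * ‖x‖ ^ 2 - ‖⟪a, x⟫_𝕜‖ ^ 2) := by
    rw [← hnorm]; ring
  rw [hp, ← hRHS]
  calc ‖x‖ ^ 2 / ‖b‖ ^ 2 * ‖α * ⟪p, b⟫_𝕜 - β * ⟪a, b⟫_𝕜‖ ^ 2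
      ≤ ‖x‖ ^ 2 / ‖b‖ ^ 2 * (S * ‖b‖ ^ 2) := by
        gcongr; exact (𝕜 ∙ x).norm_mul_inner_starProjection_sub_mul_inner_sq_le a b α β
    _ = ‖x‖ ^ 2 * S * (‖b‖ ^ 2 / ‖b‖ ^ 2) := by ring
    _ ≤ ‖x‖ ^ 2 * S := mul_le_of_le_one_right (by positivity) (div_self_le_one _)

end

local notation "⟪" x ", " y "⟫" => @inner ℂ _ _ x y

theorem stmt_9_general {X : Type*} [NormedAddCommGroup X] [InnerProductSpace ℂ X]
    (a b x : X) (α β : ℂ) :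
    ‖x‖ ^ 2 / ‖b‖ ^ 2 * ‖α * ⟪a, x⟫ * ⟪x, b⟫ / (‖x‖ : ℂ) ^ 2 - β * ⟪a, b⟫‖ ^ 2 ≤
      ‖α - β‖ ^ 2 * ‖⟪a, x⟫‖ ^ 2 + ‖β‖ ^ 2 * (‖a‖ ^ 2 * ‖x‖ ^ 2 - ‖⟪a, x⟫‖ ^ 2) :=
  norm_mul_inner_mul_inner_div_sub_mul_inner_sq_le a b x α β

theorem stmt_9 {X : Type*} [NormedAddCommGroup X] [InnerProductSpace ℂ X]
    (a b x : X) (hb : b ≠ 0) (hx : x ≠ 0) (α β : ℂ) :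
    ‖x‖ ^ 2 / ‖b‖ ^ 2 * ‖α * ⟪a, x⟫ * ⟪x, b⟫ / (‖x‖ : ℂ) ^ 2 - β * ⟪a, b⟫‖ ^ 2 ≤
      ‖α - β‖ ^ 2 * ‖⟪a, x⟫‖ ^ 2 + ‖β‖ ^ 2 * (‖a‖ ^ 2 * ‖x‖ ^ 2 - ‖⟪a, x⟫‖ ^ 2) :=
  stmt_9_general a b x α β
end

section
/- For all vectors a, b, x in a complex inner product space with b ≠ 0 and x ≠ 0, one has (‖x‖²/‖b‖²)·|⟨a,x⟩⟨x,b⟩/‖x‖² − ⟨a,b⟩|² ≤ ‖a‖²‖x‖² − |⟨a,x⟩|². -/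
/-!
Let `P` be the orthogonal projection onto `xᗮ`. Then `⟪a, b⟫ - ⟪a, x⟫⟪x, b⟫ / ‖x‖² = ⟪P a, P b⟫`
and `‖a‖²‖x‖² - |⟪a, x⟫|² = ‖x‖²‖P a‖²`, so the inequality is Cauchy–Schwarz for `P a, P b`
combined with `‖P b‖ ≤ ‖b‖`.
-/

open scoped InnerProductSpace

namespace Submodule

variable {𝕜 E : Type*} [RCLike 𝕜] [NormedAddCommGroup E] [InnerProductSpace 𝕜 E]

theorem inner_starProjection_orthogonal_singleton (x a b : E) :
    ⟪(𝕜 ∙ x)ᗮ.starProjection a, (𝕜 ∙ x)ᗮ.starProjection b⟫_𝕜 =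
      ⟪a, b⟫_𝕜 - ⟪a, x⟫_𝕜 * ⟪x, b⟫_𝕜 / (‖x‖ : 𝕜) ^ 2 := by
  rw [inner_starProjection_left_eq_right,
    starProjection_eq_self_iff.mpr (starProjection_apply_mem _ b), starProjection_orthogonal_val,
    starProjection_singleton, inner_sub_right, inner_smul_right]
  push_cast
  ring

theorem norm_sq_mul_norm_starProjection_orthogonal_singleton_sq (x a : E) :
    ‖x‖ ^ 2 * ‖(𝕜 ∙ x)ᗮ.starProjection a‖ ^ 2 = ‖a‖ ^ 2 * ‖x‖ ^ 2 - ‖⟪a, x⟫_𝕜‖ ^ 2 := by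
  rcases eq_or_ne x 0 with rfl | hx
  · simp
  have h := congrArg RCLike.re (inner_starProjection_orthogonal_singleton (𝕜 := 𝕜) x a a)
  rw [← inner_conj_symm x a, RCLike.mul_conj] at h
  simp only [inner_self_eq_norm_sq_to_K] at h
  norm_cast at h
  rw [h]
  field_simp

end Submodule

local notation "⟪" x ", " y "⟫" => @inner ℂ _ _ x y

theorem stmt_10_general {X : Type*} [NormedAddCommGroup X] [InnerProductSpace ℂ X]
    (a b x : X) (hb : b ≠ 0) :
    ‖x‖ ^ 2 / ‖b‖ ^ 2 * ‖⟪a, x⟫ * ⟪x, b⟫ / (‖x‖ : ℂ) ^ 2 - ⟪a, b⟫‖ ^ 2 ≤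
      ‖a‖ ^ 2 * ‖x‖ ^ 2 - ‖⟪a, x⟫‖ ^ 2 := by
  set P := (ℂ ∙ x)ᗮ.starProjection
  have hbn : 0 < ‖b‖ := norm_pos_iff.mpr hb
  have hCS : ‖⟪P a, P b⟫‖ ≤ ‖P a‖ * ‖b‖ :=
    (norm_inner_le_norm _ _).trans (by gcongr; exact (ℂ ∙ x)ᗮ.norm_starProjection_apply_le b)
  have hPab : ⟪a, b⟫ - ⟪a, x⟫ * ⟪x, b⟫ / (‖x‖ : ℂ) ^ 2 = ⟪P a, P b⟫ :=
    (Submodule.inner_starProjection_orthogonal_singleton x a b).symm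
  rw [norm_sub_rev, hPab, ← Submodule.norm_sq_mul_norm_starProjection_orthogonal_singleton_sq]
  calc ‖x‖ ^ 2 / ‖b‖ ^ 2 * ‖⟪P a, P b⟫‖ ^ 2
      ≤ ‖x‖ ^ 2 / ‖b‖ ^ 2 * (‖P a‖ * ‖b‖) ^ 2 := by gcongr
    _ = ‖x‖ ^ 2 * ‖P a‖ ^ 2 := by field_simp

theorem stmt_10 {X : Type*} [NormedAddCommGroup X] [InnerProductSpace ℂ X]
    (a b x : X) (hb : b ≠ 0) (hx : x ≠ 0) :
    ‖x‖ ^ 2 / ‖b‖ ^ 2 * ‖⟪a, x⟫ * ⟪x, b⟫ / (‖x‖ : ℂ) ^ 2 - ⟪a, b⟫‖ ^ 2 ≤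
      ‖a‖ ^ 2 * ‖x‖ ^ 2 - ‖⟪a, x⟫‖ ^ 2 :=
  stmt_10_general a b x hb
end

section
/- (Ostrowski's inequality for inner product spaces) For all vectors a, b, x in a complex inner product space with b ≠ 0, x ≠ 0, ⟨x,b⟩ = 0 and |⟨a,b⟩| = 1, one has ‖x‖²/‖b‖² ≤ ‖a‖²‖x‖² − |⟨a,x⟩|². -/
/-! `b / ‖b‖` and `x / ‖x‖` form an orthonormal pair, so Bessel's inequality gives
`|⟨a,b⟩|² / ‖b‖² + |⟨a,x⟩|² / ‖x‖² ≤ ‖a‖²`; with `|⟨a,b⟩| = 1`, multiply by `‖x‖²`. -/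

open scoped InnerProductSpace

section

variable {𝕜 E : Type*} [RCLike 𝕜] [NormedAddCommGroup E] [InnerProductSpace 𝕜 E]

theorem orthonormal_pair {u w : E} (hu : ‖u‖ = 1) (hw : ‖w‖ = 1) (huw : ⟪u, w⟫_𝕜 = 0) :
    Orthonormal 𝕜 ![u, w] := by
  refine ⟨fun i => by fin_cases i <;> assumption, fun i j hij => ?_⟩
  fin_cases i <;> fin_cases j
  · exact absurd rfl hij
  · exact huw
  · simpa [inner_eq_zero_symm] using huw
  · exact absurd rfl hij

theorem norm_inner_sq_add_norm_inner_sq_le {u w : E} (hu : ‖u‖ = 1) (hw : ‖w‖ = 1)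
    (huw : ⟪u, w⟫_𝕜 = 0) (a : E) : ‖⟪u, a⟫_𝕜‖ ^ 2 + ‖⟪w, a⟫_𝕜‖ ^ 2 ≤ ‖a‖ ^ 2 := by
  simpa [Fin.sum_univ_two] using
    (orthonormal_pair hu hw huw).sum_inner_products_le (s := Finset.univ) a

theorem norm_inner_smul_inv_norm (v a : E) :
    ‖⟪(‖v‖⁻¹ : 𝕜) • v, a⟫_𝕜‖ = ‖⟪a, v⟫_𝕜‖ / ‖v‖ := by
  rw [inner_smul_left, norm_mul, RCLike.norm_conj, norm_inv, RCLike.norm_coe_norm,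
    norm_inner_symm, inv_mul_eq_div]

theorem norm_inner_sq_div_add_norm_inner_sq_div_le {b x : E} (hb : b ≠ 0) (hx : x ≠ 0)
    (h : ⟪x, b⟫_𝕜 = 0) (a : E) :
    ‖⟪a, b⟫_𝕜‖ ^ 2 / ‖b‖ ^ 2 + ‖⟪a, x⟫_𝕜‖ ^ 2 / ‖x‖ ^ 2 ≤ ‖a‖ ^ 2 := by
  have hunit := norm_inner_sq_add_norm_inner_sq_le (norm_smul_inv_norm (𝕜 := 𝕜) hb)
    (norm_smul_inv_norm hx)
    (by rw [inner_smul_left, inner_smul_right, inner_eq_zero_symm.mp h, mul_zero, mul_zero]) a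
  simpa only [norm_inner_smul_inv_norm, div_pow] using hunit

end

local notation "⟪" x ", " y "⟫" => @inner ℂ _ _ x y

theorem stmt_12 {X : Type*} [NormedAddCommGroup X] [InnerProductSpace ℂ X]
    (a b x : X) (hb : b ≠ 0) (hx : x ≠ 0) (h : ⟪x, b⟫ = 0) (hab : ‖⟪a, b⟫‖ = 1) :
    ‖x‖ ^ 2 / ‖b‖ ^ 2 ≤ ‖a‖ ^ 2 * ‖x‖ ^ 2 - ‖⟪a, x⟫‖ ^ 2 := by
  have hbessel := norm_inner_sq_div_add_norm_inner_sq_div_le hb hx h a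
  rw [hab, one_pow] at hbessel
  calc ‖x‖ ^ 2 / ‖b‖ ^ 2
      = (1 / ‖b‖ ^ 2 + ‖⟪a, x⟫‖ ^ 2 / ‖x‖ ^ 2) * ‖x‖ ^ 2 - ‖⟪a, x⟫‖ ^ 2 := by field_simp; ring
    _ ≤ ‖a‖ ^ 2 * ‖x‖ ^ 2 - ‖⟪a, x⟫‖ ^ 2 := by gcongr
end

section
/- For all vectors a, b, x in a complex inner product space with a ≠ 0, and all α, β ∈ ℂ with α ≠ β, β ≠ 0 and |α−β| ≤ |β|, one has |β|‖x‖²‖a‖‖b‖ − |α⟨a,x⟩⟨x,b⟩ − β‖x‖²⟨a,b⟩| ≥ (|β|² − |α−β|²)·‖b‖·|⟨a,x⟩|² / (2|β|‖a‖) ≥ 0. -/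
local notation "⟪" x ", " y "⟫" => @inner ℂ _ _ x y

/-! With `z = conj (α ⟪a, x⟫) • x - conj (β ‖x‖²) • a` the complex number inside the norm is
`⟪z, b⟫`, so by Cauchy–Schwarz it suffices to bound `M - ‖z‖` from below, where
`M = |β| ‖x‖² ‖a‖`. Expanding the square gives
`M² - ‖z‖² = ‖x‖² (|β|² - |α - β|²) |⟪a, x⟫|²`, which is nonnegative, and
`M² - ‖z‖² ≤ 2 M (M - ‖z‖)` turns this into the claimed bound after dividing by `‖x‖²`. -/

open ComplexConjugate

section

variable {X : Type*} [NormedAddCommGroup X] [InnerProductSpace ℂ X]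

noncomputable def reprVec (α β : ℂ) (a x : X) : X :=
  conj (α * ⟪a, x⟫) • x - conj (β * (‖x‖ : ℂ) ^ 2) • a

variable (α β : ℂ) (a x : X)

theorem inner_reprVec_left (b : X) :
    ⟪reprVec α β a x, b⟫ = α * ⟪a, x⟫ * ⟪x, b⟫ - β * (‖x‖ : ℂ) ^ 2 * ⟪a, b⟫ := by
  simp only [reprVec, inner_sub_left, inner_smul_left, Complex.conj_conj]

theorem norm_reprVec_sq_add :
    ‖reprVec α β a x‖ ^ 2 + ‖x‖ ^ 2 * ((‖β‖ ^ 2 - ‖α - β‖ ^ 2) * ‖⟪a, x⟫‖ ^ 2) =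
      (‖β‖ * ‖x‖ ^ 2 * ‖a‖) ^ 2 := by
  have hcross : RCLike.re ⟪conj (α * ⟪a, x⟫) • x, conj (β * (‖x‖ : ℂ) ^ 2) • a⟫ =
      ‖x‖ ^ 2 * ‖⟪a, x⟫‖ ^ 2 * (α * conj β).re := by
    rw [inner_smul_left, inner_smul_right, Complex.conj_conj]
    have : α * ⟪a, x⟫ * (conj (β * (‖x‖ : ℂ) ^ 2) * ⟪x, a⟫) =
        ((‖x‖ ^ 2 * ‖⟪a, x⟫‖ ^ 2 : ℝ) : ℂ) * (α * conj β) := by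
      rw [Complex.ofReal_mul, ← Complex.normSq_eq_norm_sq, ← Complex.mul_conj,
        inner_conj_symm]
      simp only [map_mul, map_pow, Complex.conj_ofReal]
      push_cast
      ring
    rw [this, RCLike.re_to_complex, Complex.re_ofReal_mul]
  have hαβ := Complex.normSq_sub α β
  simp only [Complex.normSq_eq_norm_sq] at hαβ
  rw [reprVec, norm_sub_sq (𝕜 := ℂ), norm_smul, norm_smul, hcross]
  simp only [map_mul, map_pow, Complex.conj_ofReal, RCLike.norm_conj, norm_mul, norm_pow,
    Complex.norm_real, norm_norm]
  rw [hαβ]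
  ring

theorem norm_reprVec_le {α β : ℂ} (h : ‖α - β‖ ≤ ‖β‖) :
    ‖reprVec α β a x‖ ≤ ‖β‖ * ‖x‖ ^ 2 * ‖a‖ := by
  have hc : 0 ≤ ‖β‖ ^ 2 - ‖α - β‖ ^ 2 := sub_nonneg.2 (pow_le_pow_left₀ (norm_nonneg _) h 2)
  have hgap : 0 ≤ ‖x‖ ^ 2 * ((‖β‖ ^ 2 - ‖α - β‖ ^ 2) * ‖⟪a, x⟫‖ ^ 2) := by positivity
  refine (sq_le_sq₀ (norm_nonneg _) (by positivity)).1 ?_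
  linarith [norm_reprVec_sq_add α β a x]

theorem sq_sub_sq_mul_norm_inner_sq_le :
    (‖β‖ ^ 2 - ‖α - β‖ ^ 2) * ‖⟪a, x⟫‖ ^ 2 ≤
      2 * ‖β‖ * ‖a‖ * (‖β‖ * ‖x‖ ^ 2 * ‖a‖ - ‖reprVec α β a x‖) := by
  rcases eq_or_ne x 0 with rfl | hx
  · simp [reprVec]
  set M := ‖β‖ * ‖x‖ ^ 2 * ‖a‖
  set N := ‖reprVec α β a x‖
  -- `M ^ 2 - N ^ 2 ≤ 2 * M * (M - N)` is `0 ≤ (M - N) ^ 2`.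
  have key : ‖x‖ ^ 2 * ((‖β‖ ^ 2 - ‖α - β‖ ^ 2) * ‖⟪a, x⟫‖ ^ 2) ≤ 2 * M * (M - N) := by
    nlinarith [norm_reprVec_sq_add α β a x, sq_nonneg (M - N)]
  refine le_of_mul_le_mul_left ?_ (by positivity : 0 < ‖x‖ ^ 2)
  linarith

end

theorem stmt_13_general {X : Type*} [NormedAddCommGroup X] [InnerProductSpace ℂ X]
    (a b x : X) (α β : ℂ)
    (h : ‖α - β‖ ≤ ‖β‖) :
    ‖β‖ * ‖x‖ ^ 2 * ‖a‖ * ‖b‖ - ‖α * ⟪a, x⟫ * ⟪x, b⟫ - β * (‖x‖ : ℂ) ^ 2 * ⟪a, b⟫‖ ≥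
      (‖β‖ ^ 2 - ‖α - β‖ ^ 2) * ‖b‖ * ‖⟪a, x⟫‖ ^ 2 / (2 * ‖β‖ * ‖a‖) ∧
    (‖β‖ ^ 2 - ‖α - β‖ ^ 2) * ‖b‖ * ‖⟪a, x⟫‖ ^ 2 / (2 * ‖β‖ * ‖a‖) ≥ 0 := by
  rw [← inner_reprVec_left]
  set z := reprVec α β a x
  set M := ‖β‖ * ‖x‖ ^ 2 * ‖a‖
  have hc : 0 ≤ ‖β‖ ^ 2 - ‖α - β‖ ^ 2 := sub_nonneg.2 (pow_le_pow_left₀ (norm_nonneg _) h 2)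
  have hgap : (M - ‖z‖) * ‖b‖ ≤ M * ‖b‖ - ‖⟪z, b⟫‖ := by
    linarith [norm_inner_le_norm (𝕜 := ℂ) z b]
  have hgap_nonneg : 0 ≤ (M - ‖z‖) * ‖b‖ :=
    mul_nonneg (sub_nonneg.2 (norm_reprVec_le a x h)) (norm_nonneg b)
  refine ⟨div_le_of_le_mul₀ (by positivity) (hgap_nonneg.trans hgap) ?_, by positivity⟩
  calc (‖β‖ ^ 2 - ‖α - β‖ ^ 2) * ‖b‖ * ‖⟪a, x⟫‖ ^ 2
      = (‖β‖ ^ 2 - ‖α - β‖ ^ 2) * ‖⟪a, x⟫‖ ^ 2 * ‖b‖ := by ring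
    _ ≤ 2 * ‖β‖ * ‖a‖ * (M - ‖z‖) * ‖b‖ :=
        mul_le_mul_of_nonneg_right (sq_sub_sq_mul_norm_inner_sq_le α β a x) (norm_nonneg b)
    _ = (M - ‖z‖) * ‖b‖ * (2 * ‖β‖ * ‖a‖) := by ring
    _ ≤ (M * ‖b‖ - ‖⟪z, b⟫‖) * (2 * ‖β‖ * ‖a‖) := by gcongr

theorem stmt_13 {X : Type*} [NormedAddCommGroup X] [InnerProductSpace ℂ X]
    (a b x : X) (ha : a ≠ 0) (α β : ℂ) (hne : α ≠ β) (hβ : β ≠ 0)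
    (h : ‖α - β‖ ≤ ‖β‖) :
    ‖β‖ * ‖x‖ ^ 2 * ‖a‖ * ‖b‖ - ‖α * ⟪a, x⟫ * ⟪x, b⟫ - β * (‖x‖ : ℂ) ^ 2 * ⟪a, b⟫‖ ≥
      (‖β‖ ^ 2 - ‖α - β‖ ^ 2) * ‖b‖ * ‖⟪a, x⟫‖ ^ 2 / (2 * ‖β‖ * ‖a‖) ∧
    (‖β‖ ^ 2 - ‖α - β‖ ^ 2) * ‖b‖ * ‖⟪a, x⟫‖ ^ 2 / (2 * ‖β‖ * ‖a‖) ≥ 0 :=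
  stmt_13_general a b x α β h
end

section
/- For all nonzero vectors a, b, x in a complex inner product space and all α, β ∈ ℂ with max{|α−β|, |β|} ≠ 0, setting A(α,β) = (|α|·|⟨a,x⟩|·(‖x‖²‖b‖² − |⟨x,b⟩|²)^{1/2} − |β|·‖x‖²·(‖a‖²‖b‖² − |⟨a,b⟩|²)^{1/2})², one has max{|α−β|,|β|}·‖x‖²‖a‖‖b‖ − |α⟨a,x⟩⟨x,b⟩ − β‖x‖²⟨a,b⟩| ≥ A(α,β) / (2·max{|α−β|,|β|}·‖x‖²‖a‖‖b‖) ≥ 0. -/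
local notation "⟪" x ", " y "⟫" => @inner ℂ _ _ x y

/-!
Put `v = conj α ⟪x, a⟫ • x - conj β ‖x‖² • a`, so that `⟪v, b⟫ = α ⟪a, x⟫ ⟪x, b⟫ - β ‖x‖² ⟪a, b⟫`.
Writing `‖x‖² a` as its component `⟪x, a⟫ x` along `x` plus an orthogonal remainder shows
`‖v‖ ≤ M ‖x‖² ‖a‖`, where `M = max ‖α - β‖ ‖β‖`.
The Cauchy–Schwarz gap `‖w‖² ‖b‖² - |⟪w, b⟫|²` is `‖b‖²` times the squared distance from `w` to
the line `𝕜 ∙ b`, so its square root is a seminorm in `w`. The reverse triangle inequality for this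
seminorm at `v` gives `|⟪v, b⟫|² + A ≤ ‖v‖² ‖b‖² ≤ N²` with `N = M ‖x‖² ‖a‖ ‖b‖`, and then
`N - |⟪v, b⟫| ≥ (N² - |⟪v, b⟫|²) / (2N) ≥ A / (2N)`.
-/

open scoped InnerProductSpace

section

variable {𝕜 E : Type*} [RCLike 𝕜] [NormedAddCommGroup E] [InnerProductSpace 𝕜 E]

theorem norm_mul_norm_starProjection_singleton (b w : E) :
    ‖b‖ * ‖(𝕜 ∙ b).starProjection w‖ = ‖⟪w, b⟫_𝕜‖ := by
  rcases eq_or_ne b 0 with rfl | hb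
  · simp
  have h := congrArg norm (Submodule.smul_starProjection_singleton 𝕜 (v := b) w)
  rw [norm_smul, norm_smul, RCLike.norm_ofReal, abs_of_nonneg (by positivity),
    norm_inner_symm, sq, mul_assoc, mul_comm ‖⟪w, b⟫_𝕜‖] at h
  exact mul_left_cancel₀ (norm_ne_zero_iff.mpr hb) h

theorem sq_norm_mul_sq_norm_sub_sq_norm_inner (w b : E) :
    ‖w‖ ^ 2 * ‖b‖ ^ 2 - ‖⟪w, b⟫_𝕜‖ ^ 2 = (‖b‖ * ‖(𝕜 ∙ b)ᗮ.starProjection w‖) ^ 2 := by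
  rw [← norm_mul_norm_starProjection_singleton b w,
    Submodule.norm_sq_eq_add_norm_sq_starProjection w (𝕜 ∙ b)]
  ring

theorem sqrt_sq_norm_mul_sq_norm_sub_sq_norm_inner (w b : E) :
    √(‖w‖ ^ 2 * ‖b‖ ^ 2 - ‖⟪w, b⟫_𝕜‖ ^ 2) = ‖b‖ * ‖(𝕜 ∙ b)ᗮ.starProjection w‖ := by
  rw [sq_norm_mul_sq_norm_sub_sq_norm_inner, Real.sqrt_sq (by positivity)]

theorem sq_sub_le_sq_norm_mul_sq_norm_sub_sq_norm_inner (u w b : E) (c d : 𝕜) :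
    (‖c‖ * √(‖u‖ ^ 2 * ‖b‖ ^ 2 - ‖⟪u, b⟫_𝕜‖ ^ 2) -
        ‖d‖ * √(‖w‖ ^ 2 * ‖b‖ ^ 2 - ‖⟪w, b⟫_𝕜‖ ^ 2)) ^ 2 ≤
      ‖c • u - d • w‖ ^ 2 * ‖b‖ ^ 2 - ‖⟪c • u - d • w, b⟫_𝕜‖ ^ 2 := by
  set P := (𝕜 ∙ b)ᗮ.starProjection
  have key : |‖c‖ * ‖P u‖ - ‖d‖ * ‖P w‖| ≤ ‖P (c • u - d • w)‖ := by
    rw [map_sub, map_smul, map_smul, ← norm_smul, ← norm_smul]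
    exact abs_norm_sub_norm_le _ _
  rw [sqrt_sq_norm_mul_sq_norm_sub_sq_norm_inner, sqrt_sq_norm_mul_sq_norm_sub_sq_norm_inner,
    sq_norm_mul_sq_norm_sub_sq_norm_inner]
  calc (‖c‖ * (‖b‖ * ‖P u‖) - ‖d‖ * (‖b‖ * ‖P w‖)) ^ 2
      = (‖b‖ * |‖c‖ * ‖P u‖ - ‖d‖ * ‖P w‖|) ^ 2 := by rw [mul_pow, sq_abs]; ring
    _ ≤ (‖b‖ * ‖P (c • u - d • w)‖) ^ 2 := by gcongr

theorem norm_smul_add_smul_le_of_inner_eq_zero {u w : E} (h : ⟪u, w⟫_𝕜 = 0) (p q : 𝕜) :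
    ‖p • u + q • w‖ ≤ max ‖p‖ ‖q‖ * ‖u + w‖ := by
  have hpq : ⟪p • u, q • w⟫_𝕜 = 0 := by simp [inner_smul_left, inner_smul_right, h]
  refine le_of_sq_le_sq ?_ (by positivity)
  rw [mul_pow, sq, sq ‖u + w‖, norm_add_sq_eq_norm_sq_add_norm_sq_of_inner_eq_zero _ _ hpq,
    norm_add_sq_eq_norm_sq_add_norm_sq_of_inner_eq_zero _ _ h, norm_smul, norm_smul]
  have hp : ‖p‖ ^ 2 ≤ max ‖p‖ ‖q‖ ^ 2 := by gcongr; exact le_max_left _ _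
  have hq : ‖q‖ ^ 2 ≤ max ‖p‖ ‖q‖ ^ 2 := by gcongr; exact le_max_right _ _
  nlinarith [sq_nonneg ‖u‖, sq_nonneg ‖w‖]

open ComplexConjugate in
theorem norm_conj_smul_sub_conj_smul_le (x a : E) (α β : 𝕜) :
    ‖(conj α * ⟪x, a⟫_𝕜) • x - (conj β * (‖x‖ : 𝕜) ^ 2) • a‖ ≤
      max ‖α - β‖ ‖β‖ * (‖x‖ ^ 2 * ‖a‖) := by
  set u := ⟪x, a⟫_𝕜 • x
  set w := (‖x‖ : 𝕜) ^ 2 • a - u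
  have huw : ⟪u, w⟫_𝕜 = 0 := by
    simp only [u, w, inner_sub_right, inner_smul_left, inner_smul_right]
    rw [inner_self_eq_norm_sq_to_K]
    ring
  have hv : (conj α * ⟪x, a⟫_𝕜) • x - (conj β * (‖x‖ : 𝕜) ^ 2) • a
      = (conj α - conj β) • u + (-conj β) • w := by
    simp only [u, w]
    module
  calc _ = ‖(conj α - conj β) • u + (-conj β) • w‖ := by rw [hv]
    _ ≤ max ‖conj α - conj β‖ ‖-conj β‖ * ‖u + w‖ := norm_smul_add_smul_le_of_inner_eq_zero huw _ _
    _ = max ‖α - β‖ ‖β‖ * (‖x‖ ^ 2 * ‖a‖) := by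
      rw [← map_sub, norm_neg, RCLike.norm_conj, RCLike.norm_conj, add_sub_cancel, norm_smul,
        norm_pow, RCLike.norm_ofReal, abs_norm]

end

theorem div_two_mul_le_sub_of_sq_add_le_sq {A t N : ℝ} (hA : 0 ≤ A) (hN : 0 ≤ N)
    (h : t ^ 2 + A ≤ N ^ 2) : A / (2 * N) ≤ N - t := by
  rcases hN.eq_or_lt with rfl | hN
  -- `A / 0 = 0`
  · simp only [mul_zero, div_zero, zero_sub, neg_nonneg]
    nlinarith
  rw [div_le_iff₀ (by positivity)]
  nlinarith

open ComplexConjugate in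
theorem stmt_14_general {X : Type*} [NormedAddCommGroup X] [InnerProductSpace ℂ X]
    (a b x : X) (α β : ℂ) :
    max ‖α - β‖ ‖β‖ * ‖x‖ ^ 2 * ‖a‖ * ‖b‖ -
        ‖α * ⟪a, x⟫ * ⟪x, b⟫ - β * (‖x‖ : ℂ) ^ 2 * ⟪a, b⟫‖ ≥
      (‖α‖ * ‖⟪a, x⟫‖ * Real.sqrt (‖x‖ ^ 2 * ‖b‖ ^ 2 - ‖⟪x, b⟫‖ ^ 2) -
        ‖β‖ * ‖x‖ ^ 2 * Real.sqrt (‖a‖ ^ 2 * ‖b‖ ^ 2 - ‖⟪a, b⟫‖ ^ 2)) ^ 2 /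
        (2 * max ‖α - β‖ ‖β‖ * ‖x‖ ^ 2 * ‖a‖ * ‖b‖) ∧
    (‖α‖ * ‖⟪a, x⟫‖ * Real.sqrt (‖x‖ ^ 2 * ‖b‖ ^ 2 - ‖⟪x, b⟫‖ ^ 2) -
        ‖β‖ * ‖x‖ ^ 2 * Real.sqrt (‖a‖ ^ 2 * ‖b‖ ^ 2 - ‖⟪a, b⟫‖ ^ 2)) ^ 2 /
        (2 * max ‖α - β‖ ‖β‖ * ‖x‖ ^ 2 * ‖a‖ * ‖b‖) ≥ 0 := by
  have hgram := sq_sub_le_sq_norm_mul_sq_norm_sub_sq_norm_inner x a b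
    (conj α * ⟪x, a⟫) (conj β * (‖x‖ : ℂ) ^ 2)
  rw [norm_mul, norm_mul, RCLike.norm_conj, RCLike.norm_conj, norm_inner_symm, norm_pow,
    Complex.norm_real, norm_norm] at hgram
  set v := (conj α * ⟪x, a⟫) • x - (conj β * (‖x‖ : ℂ) ^ 2) • a
  have hvb : ⟪v, b⟫ = α * ⟪a, x⟫ * ⟪x, b⟫ - β * (‖x‖ : ℂ) ^ 2 * ⟪a, b⟫ := by
    simp only [v, inner_sub_left, inner_smul_left, map_mul, Complex.conj_conj, inner_conj_symm,
      map_pow, Complex.conj_ofReal]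
  have hv : ‖v‖ ≤ max ‖α - β‖ ‖β‖ * (‖x‖ ^ 2 * ‖a‖) := norm_conj_smul_sub_conj_smul_le x a α β
  have hN : ‖v‖ ^ 2 * ‖b‖ ^ 2 ≤ (max ‖α - β‖ ‖β‖ * ‖x‖ ^ 2 * ‖a‖ * ‖b‖) ^ 2 := by
    rw [← mul_pow, mul_assoc _ (‖x‖ ^ 2)]
    gcongr
  rw [← hvb]
  refine ⟨?_, by positivity⟩
  rw [ge_iff_le, mul_assoc 2, mul_assoc 2, mul_assoc 2]
  exact div_two_mul_le_sub_of_sq_add_le_sq (sq_nonneg _) (by positivity) (by linarith)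

theorem stmt_14 {X : Type*} [NormedAddCommGroup X] [InnerProductSpace ℂ X]
    (a b x : X) (ha : a ≠ 0) (hb : b ≠ 0) (hx : x ≠ 0) (α β : ℂ)
    (h : max ‖α - β‖ ‖β‖ ≠ 0) :
    max ‖α - β‖ ‖β‖ * ‖x‖ ^ 2 * ‖a‖ * ‖b‖ -
        ‖α * ⟪a, x⟫ * ⟪x, b⟫ - β * (‖x‖ : ℂ) ^ 2 * ⟪a, b⟫‖ ≥
      (‖α‖ * ‖⟪a, x⟫‖ * Real.sqrt (‖x‖ ^ 2 * ‖b‖ ^ 2 - ‖⟪x, b⟫‖ ^ 2) -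
        ‖β‖ * ‖x‖ ^ 2 * Real.sqrt (‖a‖ ^ 2 * ‖b‖ ^ 2 - ‖⟪a, b⟫‖ ^ 2)) ^ 2 /
        (2 * max ‖α - β‖ ‖β‖ * ‖x‖ ^ 2 * ‖a‖ * ‖b‖) ∧
    (‖α‖ * ‖⟪a, x⟫‖ * Real.sqrt (‖x‖ ^ 2 * ‖b‖ ^ 2 - ‖⟪x, b⟫‖ ^ 2) -
        ‖β‖ * ‖x‖ ^ 2 * Real.sqrt (‖a‖ ^ 2 * ‖b‖ ^ 2 - ‖⟪a, b⟫‖ ^ 2)) ^ 2 /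
        (2 * max ‖α - β‖ ‖β‖ * ‖x‖ ^ 2 * ‖a‖ * ‖b‖) ≥ 0 :=
  stmt_14_general a b x α β
end

section
/- (Refined Richard inequality) For all nonzero vectors a, b, x in a complex inner product space, setting A = (|⟨a,x⟩|·(‖x‖²‖b‖² − |⟨x,b⟩|²)^{1/2} − (1/2)‖x‖²·(‖a‖²‖b‖² − |⟨a,b⟩|²)^{1/2})², one has |⟨a,x⟩⟨x,b⟩ − (1/2)‖x‖²⟨a,b⟩| ≤ (1/2)‖x‖²‖a‖‖b‖ − A/(‖x‖²‖a‖‖b‖). -/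
local notation "⟪" x ", " y "⟫" => @inner ℂ _ _ x y

/-!
Put `p = ⟪a, x⟫ ⟪x, b⟫` and `q = ‖x‖² ⟪a, b⟫ - p`, so that the left-hand side is `‖p - q‖ / 2`
and `p + q = ‖x‖² ⟪a, b⟫`. Since `q` is `‖x‖²` times the inner product of the components of `a`
and `b` orthogonal to `x`, Cauchy–Schwarz gives `‖q‖ ≤ A B`, where `B` is the square root in the
statement and `A` its analogue for `a`; with `α = ‖⟪a, x⟫‖`, `β = ‖⟪x, b⟫‖` we have `‖p‖ = α β`
and `M = ‖x‖² ‖a‖ ‖b‖` satisfies `M² = (α² + A²)(β² + B²)`.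
Writing `t = ‖p - q‖` and `s = √(M² - ‖p + q‖²)`, the parallelogram law and the triangle
inequalities for `p`, `q` force `(2 α B - s)² ≤ M² - t²`, and the elementary bound
`t ≤ M - (M² - t²) / (2 M)` turns this into the claim.
-/

theorem half_le_half_sub_sq_div {M t c : ℝ} (hM : 0 < M) (h : c ^ 2 ≤ M ^ 2 - t ^ 2) :
    t / 2 ≤ M / 2 - (c / 2) ^ 2 / M := by
  have : (c / 2) ^ 2 / M ≤ (M - t) / 2 := by
    rw [div_le_iff₀ hM]
    nlinarith [sq_nonneg (M - t)]
  linarith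

theorem sq_two_mul_mul_sub_le {α β A B r w s t : ℝ} (hα : 0 ≤ α) (hB : 0 ≤ B)
    (hrAB : r ≤ A * B) (hw₁ : |α * β - r| ≤ w) (hw₂ : w ≤ α * β + r) (hs : 0 ≤ s)
    (hs2 : s ^ 2 = (α ^ 2 + A ^ 2) * (β ^ 2 + B ^ 2) - w ^ 2)
    (ht : t ^ 2 + w ^ 2 = 2 * (α * β) ^ 2 + 2 * r ^ 2) :
    (2 * α * B - s) ^ 2 ≤ (α ^ 2 + A ^ 2) * (β ^ 2 + B ^ 2) - t ^ 2 := by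
  have hw : 0 ≤ w := (abs_nonneg _).trans hw₁
  have hr : 0 ≤ r := by linarith [le_abs_self (α * β - r)]
  have heron₁ : 0 ≤ w ^ 2 - (α * β - r) ^ 2 :=
    sub_nonneg.mpr (sq_le_sq' (abs_le.mp hw₁).1 (abs_le.mp hw₁).2)
  have heron₂ : 0 ≤ (α * β + r) ^ 2 - w ^ 2 := sub_nonneg.mpr (pow_le_pow_left₀ hw hw₂ 2)
  have hAB : 0 ≤ (A * B) ^ 2 - r ^ 2 := sub_nonneg.mpr (pow_le_pow_left₀ hr hrAB 2)
  suffices 2 * α ^ 2 * B ^ 2 + (α * β) ^ 2 + r ^ 2 - w ^ 2 ≤ 2 * α * B * s by nlinarith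
  -- the squared gap is a sum of a Cauchy–Schwarz term and Heron's expression for the triangle
  -- with sides `α β`, `r`, `w`
  have key : (2 * α * B * s) ^ 2 - (2 * α ^ 2 * B ^ 2 + (α * β) ^ 2 + r ^ 2 - w ^ 2) ^ 2 =
      4 * α ^ 2 * ((A * B) ^ 2 - r ^ 2) * (β ^ 2 + B ^ 2) +
        (w ^ 2 - (α * β - r) ^ 2) * ((α * β + r) ^ 2 - w ^ 2) := by
    linear_combination (4 * α ^ 2 * B ^ 2) * hs2
  refine le_of_sq_le_sq ?_ (by positivity)
  nlinarith [key, mul_nonneg heron₁ heron₂,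
    mul_nonneg (mul_nonneg (sq_nonneg (2 * α)) hAB) (add_nonneg (sq_nonneg β) (sq_nonneg B))]

theorem norm_sub_div_two_le {F : Type*} [NormedAddCommGroup F] [InnerProductSpace ℝ F]
    {p q : F} {α β A B M : ℝ} (hα : 0 ≤ α) (hB : 0 ≤ B) (hM : 0 < M)
    (hM2 : M ^ 2 = (α ^ 2 + A ^ 2) * (β ^ 2 + B ^ 2)) (hp : ‖p‖ = α * β) (hq : ‖q‖ ≤ A * B) :
    ‖p - q‖ / 2 ≤ M / 2 - (α * B - √(M ^ 2 - ‖p + q‖ ^ 2) / 2) ^ 2 / M := by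
  have hw₁ : |α * β - ‖q‖| ≤ ‖p + q‖ := by
    simpa [hp] using abs_norm_sub_norm_le p (-q)
  have hw₂ : ‖p + q‖ ≤ α * β + ‖q‖ := hp ▸ norm_add_le p q
  have hwM : ‖p + q‖ ≤ M := by
    have : α * β + A * B ≤ M := le_of_sq_le_sq (by nlinarith [sq_nonneg (α * B - A * β)]) hM.le
    linarith
  have hs2 : √(M ^ 2 - ‖p + q‖ ^ 2) ^ 2 = M ^ 2 - ‖p + q‖ ^ 2 :=
    Real.sq_sqrt (sub_nonneg.mpr (pow_le_pow_left₀ (norm_nonneg _) hwM 2))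
  have ht : ‖p - q‖ ^ 2 + ‖p + q‖ ^ 2 = 2 * (α * β) ^ 2 + 2 * ‖q‖ ^ 2 := by
    rw [← hp]
    linear_combination parallelogram_law_with_norm ℝ p q
  have := sq_two_mul_mul_sub_le hα hB hq hw₁ hw₂ (Real.sqrt_nonneg _) (hM2 ▸ hs2) ht
  rw [← hM2] at this
  convert half_le_half_sub_sq_div hM this using 4
  ring

section
variable {X : Type*} [NormedAddCommGroup X] [InnerProductSpace ℂ X]

theorem inner_sq_smul_sub_inner_smul (x u v : X) :
    ⟪(‖x‖ : ℂ) ^ 2 • u - ⟪x, u⟫ • x, (‖x‖ : ℂ) ^ 2 • v - ⟪x, v⟫ • x⟫ =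
      (‖x‖ : ℂ) ^ 2 * ((‖x‖ : ℂ) ^ 2 * ⟪u, v⟫ - ⟪u, x⟫ * ⟪x, v⟫) := by
  simp only [inner_sub_left, inner_sub_right, inner_smul_left, inner_smul_right,
    inner_self_eq_norm_sq_to_K, RCLike.ofReal_eq_complex_ofReal, inner_conj_symm, map_pow,
    Complex.conj_ofReal]
  ring

theorem norm_sq_smul_sub_inner_smul (x u : X) :
    ‖(‖x‖ : ℂ) ^ 2 • u - ⟪x, u⟫ • x‖ = ‖x‖ * √(‖x‖ ^ 2 * ‖u‖ ^ 2 - ‖⟪u, x⟫‖ ^ 2) := by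
  have h : ‖(‖x‖ : ℂ) ^ 2 • u - ⟪x, u⟫ • x‖ ^ 2 =
      ‖x‖ ^ 2 * (‖x‖ ^ 2 * ‖u‖ ^ 2 - ‖⟪u, x⟫‖ ^ 2) := by
    have := inner_sq_smul_sub_inner_smul x u u
    rw [inner_self_eq_norm_sq_to_K, inner_self_eq_norm_sq_to_K, ← inner_conj_symm u x,
      RCLike.conj_mul, norm_inner_symm x u, RCLike.ofReal_eq_complex_ofReal] at this
    exact_mod_cast this
  rw [← Real.sqrt_sq (norm_nonneg _), h, Real.sqrt_mul (sq_nonneg _),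
    Real.sqrt_sq (norm_nonneg _)]

theorem norm_sq_mul_inner_sub_inner_mul_inner_le (a b x : X) :
    ‖(‖x‖ : ℂ) ^ 2 * ⟪a, b⟫ - ⟪a, x⟫ * ⟪x, b⟫‖ ≤
      √(‖x‖ ^ 2 * ‖a‖ ^ 2 - ‖⟪a, x⟫‖ ^ 2) * √(‖x‖ ^ 2 * ‖b‖ ^ 2 - ‖⟪x, b⟫‖ ^ 2) := by
  rcases eq_or_ne x 0 with rfl | hx
  · simp
  have := norm_inner_le_norm (𝕜 := ℂ) ((‖x‖ : ℂ) ^ 2 • a - ⟪x, a⟫ • x)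
    ((‖x‖ : ℂ) ^ 2 • b - ⟪x, b⟫ • x)
  rw [inner_sq_smul_sub_inner_smul, norm_mul, norm_pow, Complex.norm_real, norm_norm,
    norm_sq_smul_sub_inner_smul, norm_sq_smul_sub_inner_smul, norm_inner_symm b x] at this
  have hx2 : 0 < ‖x‖ ^ 2 := by positivity
  nlinarith
end

theorem stmt_15 {X : Type*} [NormedAddCommGroup X] [InnerProductSpace ℂ X]
    (a b x : X) (ha : a ≠ 0) (hb : b ≠ 0) (hx : x ≠ 0) :
    ‖⟪a, x⟫ * ⟪x, b⟫ - (1 / 2 : ℂ) * (‖x‖ : ℂ) ^ 2 * ⟪a, b⟫‖ ≤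
      (1 / 2) * ‖x‖ ^ 2 * ‖a‖ * ‖b‖ -
        (‖⟪a, x⟫‖ * Real.sqrt (‖x‖ ^ 2 * ‖b‖ ^ 2 - ‖⟪x, b⟫‖ ^ 2) -
          (1 / 2) * ‖x‖ ^ 2 * Real.sqrt (‖a‖ ^ 2 * ‖b‖ ^ 2 - ‖⟪a, b⟫‖ ^ 2)) ^ 2 /
        (‖x‖ ^ 2 * ‖a‖ * ‖b‖) := by
  have hA2 : √(‖x‖ ^ 2 * ‖a‖ ^ 2 - ‖⟪a, x⟫‖ ^ 2) ^ 2 = ‖x‖ ^ 2 * ‖a‖ ^ 2 - ‖⟪a, x⟫‖ ^ 2 :=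
    Real.sq_sqrt (by nlinarith [norm_inner_le_norm (𝕜 := ℂ) a x, norm_nonneg ⟪a, x⟫])
  have hB2 : √(‖x‖ ^ 2 * ‖b‖ ^ 2 - ‖⟪x, b⟫‖ ^ 2) ^ 2 = ‖x‖ ^ 2 * ‖b‖ ^ 2 - ‖⟪x, b⟫‖ ^ 2 :=
    Real.sq_sqrt (by nlinarith [norm_inner_le_norm (𝕜 := ℂ) x b, norm_nonneg ⟪x, b⟫])
  have h := norm_sub_div_two_le (p := ⟪a, x⟫ * ⟪x, b⟫)
    (q := (‖x‖ : ℂ) ^ 2 * ⟪a, b⟫ - ⟪a, x⟫ * ⟪x, b⟫) (M := ‖x‖ ^ 2 * ‖a‖ * ‖b‖)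
    (norm_nonneg _) (Real.sqrt_nonneg _) (by positivity) (by rw [hA2, hB2]; ring) (norm_mul _ _)
    (norm_sq_mul_inner_sub_inner_mul_inner_le a b x)
  have hsqrt : √((‖x‖ ^ 2 * ‖a‖ * ‖b‖) ^ 2 - ‖(‖x‖ : ℂ) ^ 2 * ⟪a, b⟫‖ ^ 2) =
      ‖x‖ ^ 2 * √(‖a‖ ^ 2 * ‖b‖ ^ 2 - ‖⟪a, b⟫‖ ^ 2) := by
    rw [norm_mul, norm_pow, Complex.norm_real, norm_norm,
      show (‖x‖ ^ 2 * ‖a‖ * ‖b‖) ^ 2 - (‖x‖ ^ 2 * ‖⟪a, b⟫‖) ^ 2 =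
        (‖x‖ ^ 2) ^ 2 * (‖a‖ ^ 2 * ‖b‖ ^ 2 - ‖⟪a, b⟫‖ ^ 2) by ring,
      Real.sqrt_mul (by positivity), Real.sqrt_sq (by positivity)]
  have hdiff : ⟪a, x⟫ * ⟪x, b⟫ - ((‖x‖ : ℂ) ^ 2 * ⟪a, b⟫ - ⟪a, x⟫ * ⟪x, b⟫) =
      2 * (⟪a, x⟫ * ⟪x, b⟫ - (1 / 2 : ℂ) * (‖x‖ : ℂ) ^ 2 * ⟪a, b⟫) := by ring
  rw [add_sub_cancel, hsqrt, hdiff, norm_mul, Complex.norm_two] at h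
  convert h using 2 <;> ring
end

section
/- (Complex Precupanu inequality) For all vectors a, b and nonzero vectors w, z in a complex inner product space, one has |⟨a,w⟩⟨w,b⟩/‖w‖² + ⟨a,z⟩⟨z,b⟩/‖z‖² − 2⟨a,w⟩⟨w,z⟩⟨z,b⟩/(‖w‖²‖z‖²) − (1/2)⟨a,b⟩| ≤ (1/2)‖a‖‖b‖. -/
local notation "⟪" x ", " y "⟫" => @inner ℂ _ _ x y

/-!
Writing `R_u x = 2 (⟪u, x⟫ / ‖u‖²) u - x` for the reflection in the line `𝕜 ∙ u`, the expression
inside the norm is exactly `-(1/2) ⟪a, R_w (R_z b)⟫`. Since reflections are isometries,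
Cauchy–Schwarz bounds its norm by `(1/2) ‖a‖ ‖R_w (R_z b)‖ = (1/2) ‖a‖ ‖b‖`.
-/

open Submodule in
theorem inner_reflection_singleton_reflection_singleton {𝕜 X : Type*} [RCLike 𝕜]
    [NormedAddCommGroup X] [InnerProductSpace 𝕜 X] (a b w z : X) :
    inner 𝕜 a (reflection (𝕜 ∙ w) (reflection (𝕜 ∙ z) b)) =
      inner 𝕜 a b - 2 * (inner 𝕜 a w * inner 𝕜 w b / (‖w‖ : 𝕜) ^ 2
        + inner 𝕜 a z * inner 𝕜 z b / (‖z‖ : 𝕜) ^ 2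
        - 2 * inner 𝕜 a w * inner 𝕜 w z * inner 𝕜 z b / ((‖w‖ : 𝕜) ^ 2 * (‖z‖ : 𝕜) ^ 2)) := by
  simp only [reflection_singleton_apply, inner_sub_right, inner_add_right, inner_smul_right,
    two_smul]
  ring

theorem stmt_18_general {X : Type*} [NormedAddCommGroup X] [InnerProductSpace ℂ X]
    (a b w z : X) :
    ‖⟪a, w⟫ * ⟪w, b⟫ / (‖w‖ : ℂ) ^ 2 + ⟪a, z⟫ * ⟪z, b⟫ / (‖z‖ : ℂ) ^ 2 -
        2 * ⟪a, w⟫ * ⟪w, z⟫ * ⟪z, b⟫ / ((‖w‖ : ℂ) ^ 2 * (‖z‖ : ℂ) ^ 2) -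
        (1 / 2 : ℂ) * ⟪a, b⟫‖ ≤ (1 / 2) * ‖a‖ * ‖b‖ := by
  set v := (ℂ ∙ w).reflection ((ℂ ∙ z).reflection b)
  have hv : ‖v‖ = ‖b‖ := by simp only [v, LinearIsometryEquiv.norm_map]
  have key : ⟪a, w⟫ * ⟪w, b⟫ / (‖w‖ : ℂ) ^ 2 + ⟪a, z⟫ * ⟪z, b⟫ / (‖z‖ : ℂ) ^ 2 -
        2 * ⟪a, w⟫ * ⟪w, z⟫ * ⟪z, b⟫ / ((‖w‖ : ℂ) ^ 2 * (‖z‖ : ℂ) ^ 2) -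
        (1 / 2 : ℂ) * ⟪a, b⟫ = -(1 / 2 : ℂ) * ⟪a, v⟫ := by
    rw [inner_reflection_singleton_reflection_singleton, RCLike.ofReal_eq_complex_ofReal]
    ring
  calc _ = (1 / 2) * ‖⟪a, v⟫‖ := by rw [key, norm_mul]; norm_num
    _ ≤ (1 / 2) * (‖a‖ * ‖v‖) := by gcongr; exact norm_inner_le_norm a v
    _ = (1 / 2) * ‖a‖ * ‖b‖ := by rw [hv, mul_assoc]

theorem stmt_18 {X : Type*} [NormedAddCommGroup X] [InnerProductSpace ℂ X]
    (a b w z : X) (hw : w ≠ 0) (hz : z ≠ 0) :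
    ‖⟪a, w⟫ * ⟪w, b⟫ / (‖w‖ : ℂ) ^ 2 + ⟪a, z⟫ * ⟪z, b⟫ / (‖z‖ : ℂ) ^ 2 -
        2 * ⟪a, w⟫ * ⟪w, z⟫ * ⟪z, b⟫ / ((‖w‖ : ℂ) ^ 2 * (‖z‖ : ℂ) ^ 2) -
        (1 / 2 : ℂ) * ⟪a, b⟫‖ ≤ (1 / 2) * ‖a‖ * ‖b‖ :=
  stmt_18_general a b w z
end
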